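/- arXiv:2411.06209 — 2 statements merged into one kernel-verified Lean document; each statement's English description precedes it below -/
import Mathlib

section
/- Let γ ∈ ℝ and suppose the γ-shifted system has a dichotomy on a splitting (L1,L2). Then L1 = { x₀ ∈ ℝ^d : lim_{n→∞} e^{−γn}·x(n,x₀) = 0 }. -/
open Set Filter Topology

noncomputable section

abbrev Euc (d : ℕ) := EuclideanSpace ℝ (Fin d)

/-- The solution `x(n, x₀)` of `x(n+1) = A(n) x(n)`, `x(0,x₀) = x₀`. -/
def sol {d : ℕ} (A : ℕ → (Euc d ≃L[ℝ] Euc d)) : ℕ → Euc d → Euc d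
  | 0, x => x
  | n + 1, x => A n (sol A n x)

/-- Boundedness of the coefficients `A(n)` and their inverses. -/
def BddSys {d : ℕ} (A : ℕ → (Euc d ≃L[ℝ] Euc d)) : Prop :=
  (∃ c : ℝ, ∀ n : ℕ, ‖(A n : Euc d →L[ℝ] Euc d)‖ ≤ c) ∧
  (∃ c : ℝ, ∀ n : ℕ, ‖((A n).symm : Euc d →L[ℝ] Euc d)‖ ≤ c)

/-- `D1(γ,U)` holds uniformly (constant `C`). -/
def D1u {d : ℕ} (A : ℕ → (Euc d ≃L[ℝ] Euc d)) (γ : ℝ) (U : Submodule ℝ (Euc d)) : Prop :=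
  ∃ C : ℝ, 0 < C ∧
    ∀ m n : ℕ, m ≤ n → ∀ x₀ ∈ U,
      ‖sol A n x₀‖ ≤ C * Real.exp (γ * ((n : ℝ) - (m : ℝ))) * ‖sol A m x₀‖

/-- `D2(γ,U)` holds uniformly (constant `C`). -/
def D2u {d : ℕ} (A : ℕ → (Euc d ≃L[ℝ] Euc d)) (γ : ℝ) (U : Submodule ℝ (Euc d)) : Prop :=
  ∃ C : ℝ, 0 < C ∧
    ∀ m n : ℕ, m ≤ n → ∀ x₀ ∈ U,
      C * Real.exp (γ * ((n : ℝ) - (m : ℝ))) * ‖sol A m x₀‖ ≤ ‖sol A n x₀‖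

/-- `𝒰` is a set of subspaces of `L` whose union is `L`. -/
def IsCover {d : ℕ} (𝒰 : Set (Submodule ℝ (Euc d))) (L : Submodule ℝ (Euc d)) : Prop :=
  (∀ U ∈ 𝒰, U ≤ L) ∧ (⋃ U ∈ 𝒰, (U : Set (Euc d))) = (L : Set (Euc d))

/-- The `γ`-shifted system `x(n+1) = e^{-γ} A(n) x(n)` has a dichotomy on the
splitting `(L1,L2)`. -/
def ShiftedDichotomy {d : ℕ} (A : ℕ → (Euc d ≃L[ℝ] Euc d)) (γ : ℝ)
    (L1 L2 : Submodule ℝ (Euc d)) : Prop :=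
  IsCompl L1 L2 ∧
  ∃ 𝒰1 𝒰2 : Set (Submodule ℝ (Euc d)), IsCover 𝒰1 L1 ∧ IsCover 𝒰2 L2 ∧
    ∃ α : ℝ, 0 < α ∧ (∀ U ∈ 𝒰1, D1u A (γ - α) U) ∧ (∀ U ∈ 𝒰2, D2u A (γ + α) U)

lemma sol_add {d : ℕ} (A : ℕ → (Euc d ≃L[ℝ] Euc d)) (n : ℕ) (x y : Euc d) :
    sol A n (x + y) = sol A n x + sol A n y := by
  induction n with
  | zero => rfl
  | succ n ih => simp [sol, ih, map_add]

/-- **Dynamical characterization of the stable subspace `L1`.** -/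
theorem stable_subspace_characterization {d : ℕ} (hd : 1 ≤ d)
    (A : ℕ → (Euc d ≃L[ℝ] Euc d)) (hA : BddSys A)
    (γ : ℝ) (L1 L2 : Submodule ℝ (Euc d))
    (h : ShiftedDichotomy A γ L1 L2) :
    (L1 : Set (Euc d)) =
      {x₀ | Tendsto (fun n : ℕ => Real.exp (-(γ * (n : ℝ))) • sol A n x₀) atTop (𝓝 0)} := by
  obtain ⟨hcompl, 𝒰1, 𝒰2, ⟨h1le, h1un⟩, ⟨h2le, h2un⟩, α, hα, hD1, hD2⟩ := h
  have key1 : ∀ x₀ ∈ L1,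
      Tendsto (fun n : ℕ => Real.exp (-(γ * (n : ℝ))) • sol A n x₀) atTop (𝓝 0) := by
    intro x₀ hx₀
    have hx : x₀ ∈ ⋃ U ∈ 𝒰1, (U : Set (Euc d)) := h1un ▸ hx₀
    obtain ⟨U, hU, hxU⟩ := mem_iUnion₂.mp hx
    obtain ⟨C, hC, hD⟩ := hD1 U hU
    have hlim : Tendsto (fun n : ℕ => C * ‖x₀‖ * Real.exp (-(α * (n : ℝ)))) atTop (𝓝 0) := by
      have h1 : Tendsto (fun n : ℕ => -(α * (n : ℝ))) atTop atBot := by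
        apply tendsto_neg_atBot_iff.mpr
        exact Tendsto.const_mul_atTop hα tendsto_natCast_atTop_atTop
      have := (Real.tendsto_exp_atBot.comp h1).const_mul (C * ‖x₀‖)
      simpa using this
    apply squeeze_zero_norm _ hlim
    intro n
    have hb := hD 0 n (Nat.zero_le n) x₀ hxU
    simp only [sol, Nat.cast_zero, sub_zero] at hb
    have hexp : (0:ℝ) < Real.exp (-(γ * (n : ℝ))) := Real.exp_pos _
    calc ‖Real.exp (-(γ * (n : ℝ))) • sol A n x₀‖
        = Real.exp (-(γ * (n : ℝ))) * ‖sol A n x₀‖ := by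
          rw [norm_smul, Real.norm_eq_abs, abs_of_pos hexp]
      _ ≤ Real.exp (-(γ * (n : ℝ))) * (C * Real.exp ((γ - α) * (n : ℝ)) * ‖x₀‖) := by
          exact mul_le_mul_of_nonneg_left hb hexp.le
      _ = C * ‖x₀‖ * Real.exp (-(α * (n : ℝ))) := by
          have he : Real.exp (-(γ * (n : ℝ))) * Real.exp ((γ - α) * (n : ℝ))
              = Real.exp (-(α * (n : ℝ))) := by rw [← Real.exp_add]; ring_nf
          linear_combination (C * ‖x₀‖) * he
  ext x₀
  simp only [Set.mem_setOf_eq, SetLike.mem_coe]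
  constructor
  · exact fun hx => key1 x₀ hx
  · intro hlim
    have hx : x₀ ∈ L1 ⊔ L2 := by rw [hcompl.sup_eq_top]; trivial
    obtain ⟨y, hy, z, hz, hyz⟩ := Submodule.mem_sup.mp hx
    have hzlim : Tendsto (fun n : ℕ => Real.exp (-(γ * (n : ℝ))) • sol A n z) atTop (𝓝 0) := by
      have hylim := key1 y hy
      have heq : (fun n : ℕ => Real.exp (-(γ * (n : ℝ))) • sol A n z)
          = fun n : ℕ => Real.exp (-(γ * (n : ℝ))) • sol A n x₀
            - Real.exp (-(γ * (n : ℝ))) • sol A n y := by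
        funext n
        rw [← hyz, sol_add, smul_add]
        abel
      rw [heq]
      simpa using hlim.sub hylim
    by_cases hz0 : z = 0
    · rw [← hyz, hz0, add_zero]; exact hy
    · exfalso
      have hzz : z ∈ ⋃ U ∈ 𝒰2, (U : Set (Euc d)) := h2un ▸ hz
      obtain ⟨U, hU, hzU⟩ := mem_iUnion₂.mp hzz
      obtain ⟨C, hC, hD⟩ := hD2 U hU
      have hznorm : (0:ℝ) < ‖z‖ := norm_pos_iff.mpr hz0
      have hev : ∀ᶠ n : ℕ in atTop,
          ‖Real.exp (-(γ * (n : ℝ))) • sol A n z‖ < C * ‖z‖ := by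
        have h2 := hzlim.norm
        simp only [norm_zero] at h2
        exact h2.eventually (eventually_lt_nhds (by positivity))
      obtain ⟨n, hn⟩ := hev.exists
      have hb := hD 0 n (Nat.zero_le n) z hzU
      simp only [sol, Nat.cast_zero, sub_zero] at hb
      have hexp : (0:ℝ) < Real.exp (-(γ * (n : ℝ))) := Real.exp_pos _
      have hlow : C * ‖z‖ ≤ ‖Real.exp (-(γ * (n : ℝ))) • sol A n z‖ := by
        rw [norm_smul, Real.norm_eq_abs, abs_of_pos hexp]
        calc C * ‖z‖ = C * ‖z‖ * 1 := by ring
          _ ≤ C * ‖z‖ * Real.exp (α * (n : ℝ)) := by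
              apply mul_le_mul_of_nonneg_left _ (by positivity)
              exact Real.one_le_exp (by positivity)
          _ = Real.exp (-(γ * (n : ℝ))) * (C * Real.exp ((γ + α) * (n : ℝ)) * ‖z‖) := by
              have he : Real.exp (-(γ * (n : ℝ))) * Real.exp ((γ + α) * (n : ℝ))
                  = Real.exp (α * (n : ℝ)) := by rw [← Real.exp_add]; ring_nf
              rw [← he]; ring
          _ ≤ Real.exp (-(γ * (n : ℝ))) * ‖sol A n z‖ :=
              mul_le_mul_of_nonneg_left hb hexp.le
      exact absurd hn (not_lt.mpr hlow)

end
end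

section
/- Let k ∈ {0,…,d}, let (j1,j2) be k-admissible, and let γ ∈ ℝ. Then γ ∈ (β̄_{k,j1}, β̲_{k,j2}) (an interval in the extended reals) if and only if there exists a splitting (L1,L2) of ℝ^d with dim L1 = k such that the γ-shifted system has a dichotomy on (L1,L2) with uniformity dimensions (j1,j2). -/
open Set Filter Topology

noncomputable section

/-- `𝒢_j(L)` : the set of `j`-dimensional subspaces of `L`. -/
def Gr {d : ℕ} (j : ℕ) (L : Submodule ℝ (Euc d)) : Set (Submodule ℝ (Euc d)) :=
  {U | U ≤ L ∧ Module.finrank ℝ U = j}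

/-- Upper Bohl exponent `β̄(U)` (with the convention `sSup ∅ = -∞` in `EReal`). -/
def upperBohl {d : ℕ} (A : ℕ → (Euc d ≃L[ℝ] Euc d)) (U : Submodule ℝ (Euc d)) : EReal :=
  ⨅ N : ℕ, sSup {r : EReal | ∃ m n : ℕ, ∃ x₀ ∈ U, x₀ ≠ 0 ∧ N < n - m ∧
    r = ((((n : ℝ) - (m : ℝ))⁻¹ * Real.log (‖sol A n x₀‖ / ‖sol A m x₀‖) : ℝ) : EReal)}

/-- Lower Bohl exponent `β̲(U)` (with the convention `sInf ∅ = +∞` in `EReal`). -/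
def lowerBohl {d : ℕ} (A : ℕ → (Euc d ≃L[ℝ] Euc d)) (U : Submodule ℝ (Euc d)) : EReal :=
  ⨆ N : ℕ, sInf {r : EReal | ∃ m n : ℕ, ∃ x₀ ∈ U, x₀ ≠ 0 ∧ N < n - m ∧
    r = ((((n : ℝ) - (m : ℝ))⁻¹ * Real.log (‖sol A n x₀‖ / ‖sol A m x₀‖) : ℝ) : EReal)}

/-- Limiting upper Bohl exponent `β̄_{k,j}`. -/
def upperBohlLim {d : ℕ} (A : ℕ → (Euc d ≃L[ℝ] Euc d)) (k j : ℕ) : EReal :=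
  ⨅ L ∈ {L : Submodule ℝ (Euc d) | Module.finrank ℝ L = k},
    ⨆ U ∈ Gr j L, upperBohl A U

/-- Limiting lower Bohl exponent `β̲_{k,j}`. -/
def lowerBohlLim {d : ℕ} (A : ℕ → (Euc d ≃L[ℝ] Euc d)) (k j : ℕ) : EReal :=
  ⨆ L ∈ {L : Submodule ℝ (Euc d) | Module.finrank ℝ L = d - k},
    ⨅ U ∈ Gr j L, lowerBohl A U

/-- The `γ`-shifted system has a dichotomy on the splitting `(L1,L2)` with uniformity
dimensions `(j1,j2)`. -/
def DichotomyDim {d : ℕ} (A : ℕ → (Euc d ≃L[ℝ] Euc d)) (γ : ℝ)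
    (L1 L2 : Submodule ℝ (Euc d)) (j1 j2 : ℕ) : Prop :=
  IsCompl L1 L2 ∧ IsCover (Gr j1 L1) L1 ∧ IsCover (Gr j2 L2) L2 ∧
  ∃ α : ℝ, 0 < α ∧ (∀ U ∈ Gr j1 L1, D1u A (γ - α) U) ∧ (∀ U ∈ Gr j2 L2, D2u A (γ + α) U)

/-- `(j1,j2)` is `k`-admissible. -/
def KAdmissible (d k j1 j2 : ℕ) : Prop :=
  (k = 0 → j1 = 0 ∧ 1 ≤ j2 ∧ j2 ≤ d) ∧
  (1 ≤ k → k ≤ d - 1 → 1 ≤ j1 ∧ j1 ≤ k ∧ 1 ≤ j2 ∧ j2 ≤ d - k) ∧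
  (k = d → 1 ≤ j1 ∧ j1 ≤ d ∧ j2 = 0)

section Aux

variable {d : ℕ} (A : ℕ → (Euc d ≃L[ℝ] Euc d))

lemma sol_zero (n : ℕ) : sol A n (0 : Euc d) = 0 := by
  induction n with
  | zero => rfl
  | succ n ih => show A n (sol A n 0) = 0; rw [ih]; simp

lemma sol_ne_zero {x : Euc d} (hx : x ≠ 0) (n : ℕ) : sol A n x ≠ 0 := by
  induction n with
  | zero => exact hx
  | succ n ih =>
    intro h
    have h' : A n (sol A n x) = 0 := h
    exact ih (by simpa using congrArg (A n).symm h')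

lemma sol_norm_pos {x : Euc d} (hx : x ≠ 0) (n : ℕ) : 0 < ‖sol A n x‖ :=
  norm_pos_iff.2 (sol_ne_zero A hx n)

lemma sol_growth (hA : BddSys A) :
    ∃ c : ℝ, 1 ≤ c ∧ ∀ x : Euc d, ∀ m n : ℕ, m ≤ n →
      ‖sol A n x‖ ≤ c ^ (n - m) * ‖sol A m x‖ ∧
      ‖sol A m x‖ ≤ c ^ (n - m) * ‖sol A n x‖ := by
  obtain ⟨⟨c1, hc1⟩, ⟨c2, hc2⟩⟩ := hA
  set c : ℝ := max 1 (max c1 c2) with hcdef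
  have hc : 1 ≤ c := le_max_left _ _
  have hc0 : 0 ≤ c := le_trans zero_le_one hc
  have hstep1 : ∀ (k : ℕ) (y : Euc d), ‖A k y‖ ≤ c * ‖y‖ := by
    intro k y
    calc ‖A k y‖ ≤ ‖(A k : Euc d →L[ℝ] Euc d)‖ * ‖y‖ :=
          (A k : Euc d →L[ℝ] Euc d).le_opNorm y
      _ ≤ c * ‖y‖ := by
          apply mul_le_mul_of_nonneg_right _ (norm_nonneg y)
          exact le_trans (hc1 k) (le_trans (le_max_left _ _) (le_max_right _ _))
  have hstep2 : ∀ (k : ℕ) (y : Euc d), ‖(A k).symm y‖ ≤ c * ‖y‖ := by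
    intro k y
    calc ‖(A k).symm y‖ ≤ ‖((A k).symm : Euc d →L[ℝ] Euc d)‖ * ‖y‖ :=
          ((A k).symm : Euc d →L[ℝ] Euc d).le_opNorm y
      _ ≤ c * ‖y‖ := by
          apply mul_le_mul_of_nonneg_right _ (norm_nonneg y)
          exact le_trans (hc2 k) (le_trans (le_max_right _ _) (le_max_right _ _))
  refine ⟨c, hc, fun x m n hmn => ?_⟩
  induction n, hmn using Nat.le_induction with
  | base => simp
  | succ n hmn ih =>
    have e : n + 1 - m = (n - m) + 1 := by omega
    constructor
    · calc ‖sol A (n + 1) x‖ = ‖A n (sol A n x)‖ := rfl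
        _ ≤ c * ‖sol A n x‖ := hstep1 n _
        _ ≤ c * (c ^ (n - m) * ‖sol A m x‖) := by
            exact mul_le_mul_of_nonneg_left ih.1 hc0
        _ = c ^ (n + 1 - m) * ‖sol A m x‖ := by rw [e, pow_succ]; ring
    · have hn : sol A n x = (A n).symm (sol A (n + 1) x) := by
        show sol A n x = (A n).symm (A n (sol A n x)); simp
      calc ‖sol A m x‖ ≤ c ^ (n - m) * ‖sol A n x‖ := ih.2
        _ = c ^ (n - m) * ‖(A n).symm (sol A (n + 1) x)‖ := by rw [← hn]
        _ ≤ c ^ (n - m) * (c * ‖sol A (n + 1) x‖) := by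
            exact mul_le_mul_of_nonneg_left (hstep2 n _) (pow_nonneg hc0 _)
        _ = c ^ (n + 1 - m) * ‖sol A (n + 1) x‖ := by rw [e, pow_succ]; ring

/-- The set appearing in the Bohl exponent definitions. -/
def BSet (U : Submodule ℝ (Euc d)) (N : ℕ) : Set EReal :=
  {r : EReal | ∃ m n : ℕ, ∃ x₀ ∈ U, x₀ ≠ 0 ∧ N < n - m ∧
    r = ((((n : ℝ) - (m : ℝ))⁻¹ * Real.log (‖sol A n x₀‖ / ‖sol A m x₀‖) : ℝ) : EReal)}

lemma upperBohl_eq (U : Submodule ℝ (Euc d)) :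
    upperBohl A U = ⨅ N : ℕ, sSup (BSet A U N) := rfl

lemma lowerBohl_eq (U : Submodule ℝ (Euc d)) :
    lowerBohl A U = ⨆ N : ℕ, sInf (BSet A U N) := rfl

lemma BSet_antitone {U : Submodule ℝ (Euc d)} {N N' : ℕ} (h : N ≤ N') :
    BSet A U N' ⊆ BSet A U N := by
  rintro r ⟨m, n, x₀, hU, hx, hN, rfl⟩
  exact ⟨m, n, x₀, hU, hx, by omega, rfl⟩

lemma BSet_mono {U V : Submodule ℝ (Euc d)} (h : U ≤ V) (N : ℕ) :
    BSet A U N ⊆ BSet A V N := by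
  rintro r ⟨m, n, x₀, hU, hx, hN, rfl⟩
  exact ⟨m, n, x₀, h hU, hx, hN, rfl⟩

lemma BSet_nonempty {U : Submodule ℝ (Euc d)} {v : Euc d} (hv : v ∈ U) (hv0 : v ≠ 0) (N : ℕ) :
    (BSet A U N).Nonempty :=
  ⟨_, 0, N + 1, v, hv, hv0, by omega, rfl⟩

lemma upperBohl_mono {U V : Submodule ℝ (Euc d)} (h : U ≤ V) :
    upperBohl A U ≤ upperBohl A V :=
  iInf_mono fun N => sSup_le_sSup (BSet_mono A h N)

lemma lowerBohl_anti {U V : Submodule ℝ (Euc d)} (h : U ≤ V) :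
    lowerBohl A V ≤ lowerBohl A U :=
  iSup_mono fun N => sInf_le_sInf (BSet_mono A h N)

lemma lowerBohl_le_upperBohl {U : Submodule ℝ (Euc d)} {v : Euc d}
    (hv : v ∈ U) (hv0 : v ≠ 0) : lowerBohl A U ≤ upperBohl A U := by
  rw [lowerBohl_eq, upperBohl_eq]
  refine iSup_le fun N => le_iInf fun M => ?_
  obtain ⟨r, hr⟩ := BSet_nonempty A hv hv0 (max N M)
  exact le_trans (sInf_le (BSet_antitone A (le_max_left N M) hr))
    (le_sSup (BSet_antitone A (le_max_right N M) hr))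

end Aux
section Aux2

variable {d : ℕ} (A : ℕ → (Euc d ≃L[ℝ] Euc d))

lemma cast_gap {m n N : ℕ} (h : N < n - m) :
    (0 : ℝ) < (n : ℝ) - (m : ℝ) ∧ (N : ℝ) + 1 ≤ (n : ℝ) - (m : ℝ) ∧ m < n := by
  have hmn : m < n := by omega
  have h1 : N + 1 ≤ n - m := h
  have h2 : ((n - m : ℕ) : ℝ) = (n : ℝ) - (m : ℝ) := by
    rw [Nat.cast_sub hmn.le]
  refine ⟨?_, ?_, hmn⟩
  · rw [← h2]; exact_mod_cast Nat.sub_pos_of_lt hmn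
  · rw [← h2]
    calc ((N : ℝ) + 1) = ((N + 1 : ℕ) : ℝ) := by push_cast; ring
      _ ≤ ((n - m : ℕ) : ℝ) := by exact_mod_cast h1

lemma upperBohl_le_of_D1u {U : Submodule ℝ (Euc d)} {β : ℝ} (h : D1u A β U) :
    upperBohl A U ≤ (β : EReal) := by
  obtain ⟨C, hC, hB⟩ := h
  set C' : ℝ := max C 1 with hC'def
  have hC'1 : 1 ≤ C' := le_max_right _ _
  have hC'0 : 0 < C' := lt_of_lt_of_le one_pos hC'1
  have hlog : 0 ≤ Real.log C' := Real.log_nonneg hC'1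
  refine le_of_forall_gt_imp_ge_of_dense fun z hz => ?_
  obtain ⟨t, htβ, htz⟩ := EReal.exists_between_coe_real hz
  have htβ' : β < t := by exact_mod_cast htβ
  have htb : 0 < t - β := sub_pos.2 htβ'
  set N : ℕ := ⌈Real.log C' / (t - β)⌉₊ with hNdef
  have hNb : Real.log C' / ((N : ℝ) + 1) ≤ t - β := by
    rw [div_le_iff₀ (by positivity)]
    have h1 : Real.log C' / (t - β) ≤ (N : ℝ) := Nat.le_ceil _
    have h2 := (div_le_iff₀ htb).1 h1
    nlinarith
  rw [upperBohl_eq]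
  refine le_trans (iInf_le _ N) (le_trans ?_ htz.le)
  refine sSup_le ?_
  rintro r ⟨m, n, x₀, hU, hx, hmn, rfl⟩
  obtain ⟨ht0, htN, hmn'⟩ := cast_gap hmn
  set T : ℝ := (n : ℝ) - (m : ℝ)
  have ha : 0 < ‖sol A n x₀‖ := sol_norm_pos A hx n
  have hb : 0 < ‖sol A m x₀‖ := sol_norm_pos A hx m
  have hle : ‖sol A n x₀‖ ≤ C' * Real.exp (β * T) * ‖sol A m x₀‖ := by
    refine le_trans (hB m n hmn'.le x₀ hU) ?_
    show C * Real.exp (β * T) * ‖sol A m x₀‖ ≤ C' * Real.exp (β * T) * ‖sol A m x₀‖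
    exact mul_le_mul_of_nonneg_right
      (mul_le_mul_of_nonneg_right (le_max_left _ _) (Real.exp_pos _).le) hb.le
  have hdiv : ‖sol A n x₀‖ / ‖sol A m x₀‖ ≤ C' * Real.exp (β * T) := by
    rw [div_le_iff₀ hb]; exact hle
  have hlog2 : Real.log (‖sol A n x₀‖ / ‖sol A m x₀‖) ≤ Real.log C' + β * T := by
    calc Real.log (‖sol A n x₀‖ / ‖sol A m x₀‖)
        ≤ Real.log (C' * Real.exp (β * T)) := by
          rw [Real.log_le_log_iff (div_pos ha hb) (by positivity)]; exact hdiv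
      _ = Real.log C' + β * T := by
          rw [Real.log_mul (ne_of_gt hC'0) (Real.exp_ne_zero _), Real.log_exp]
  have key : T⁻¹ * Real.log (‖sol A n x₀‖ / ‖sol A m x₀‖) ≤ t := by
    have h1 : T⁻¹ * Real.log (‖sol A n x₀‖ / ‖sol A m x₀‖)
        ≤ T⁻¹ * (Real.log C' + β * T) :=
      mul_le_mul_of_nonneg_left hlog2 (inv_nonneg.2 ht0.le)
    have h2 : T⁻¹ * (Real.log C' + β * T) = Real.log C' / T + β := by
      field_simp
    have h3 : Real.log C' / T ≤ Real.log C' / ((N : ℝ) + 1) := by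
      apply div_le_div_of_nonneg_left hlog (by positivity) htN
    linarith
  exact_mod_cast key

lemma le_lowerBohl_of_D2u {U : Submodule ℝ (Euc d)} {β : ℝ} (h : D2u A β U) :
    (β : EReal) ≤ lowerBohl A U := by
  obtain ⟨C, hC, hB⟩ := h
  set C' : ℝ := min C 1 with hC'def
  have hC'1 : C' ≤ 1 := min_le_right _ _
  have hC'0 : 0 < C' := lt_min hC one_pos
  have hlog : Real.log C' ≤ 0 := Real.log_nonpos hC'0.le hC'1
  refine le_of_forall_lt_imp_le_of_dense fun z hz => ?_
  obtain ⟨t, htz, htβ⟩ := EReal.exists_between_coe_real hz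
  have htβ' : t < β := by exact_mod_cast htβ
  have htb : 0 < β - t := sub_pos.2 htβ'
  set N : ℕ := ⌈(-Real.log C') / (β - t)⌉₊ with hNdef
  have hNb : t ≤ β + Real.log C' / ((N : ℝ) + 1) := by
    have h1 : (-Real.log C') / (β - t) ≤ (N : ℝ) := Nat.le_ceil _
    have h2 := (div_le_iff₀ htb).1 h1
    have h3 : -Real.log C' ≤ (β - t) * ((N : ℝ) + 1) := by nlinarith
    have h4 : (t - β) * ((N : ℝ) + 1) ≤ Real.log C' := by nlinarith
    have h5 : t - β ≤ Real.log C' / ((N : ℝ) + 1) := by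
      rw [le_div_iff₀ (by positivity : (0:ℝ) < (N : ℝ) + 1)]; linarith
    linarith
  rw [lowerBohl_eq]
  refine le_trans htz.le (le_trans ?_ (le_iSup _ N))
  refine le_sInf ?_
  rintro r ⟨m, n, x₀, hU, hx, hmn, rfl⟩
  obtain ⟨ht0, htN, hmn'⟩ := cast_gap hmn
  set T : ℝ := (n : ℝ) - (m : ℝ)
  have ha : 0 < ‖sol A n x₀‖ := sol_norm_pos A hx n
  have hb : 0 < ‖sol A m x₀‖ := sol_norm_pos A hx m
  have hle : C' * Real.exp (β * T) * ‖sol A m x₀‖ ≤ ‖sol A n x₀‖ := by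
    refine le_trans ?_ (hB m n hmn'.le x₀ hU)
    show C' * Real.exp (β * T) * ‖sol A m x₀‖ ≤ C * Real.exp (β * T) * ‖sol A m x₀‖
    exact mul_le_mul_of_nonneg_right
      (mul_le_mul_of_nonneg_right (min_le_left _ _) (Real.exp_pos _).le) hb.le
  have hdiv : C' * Real.exp (β * T) ≤ ‖sol A n x₀‖ / ‖sol A m x₀‖ := by
    rw [le_div_iff₀ hb]; exact hle
  have hlog2 : Real.log C' + β * T ≤ Real.log (‖sol A n x₀‖ / ‖sol A m x₀‖) := by
    calc Real.log C' + β * T = Real.log (C' * Real.exp (β * T)) := by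
          rw [Real.log_mul (ne_of_gt hC'0) (Real.exp_ne_zero _), Real.log_exp]
      _ ≤ Real.log (‖sol A n x₀‖ / ‖sol A m x₀‖) := by
          rw [Real.log_le_log_iff (by positivity) (div_pos ha hb)]; exact hdiv
  have key : t ≤ T⁻¹ * Real.log (‖sol A n x₀‖ / ‖sol A m x₀‖) := by
    have h1 : T⁻¹ * (Real.log C' + β * T)
        ≤ T⁻¹ * Real.log (‖sol A n x₀‖ / ‖sol A m x₀‖) :=
      mul_le_mul_of_nonneg_left hlog2 (inv_nonneg.2 ht0.le)
    have h2 : T⁻¹ * (Real.log C' + β * T) = Real.log C' / T + β := by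
      field_simp
    have h3 : Real.log C' / ((N : ℝ) + 1) ≤ Real.log C' / T := by
      rw [div_le_div_iff₀ (by positivity) ht0]
      nlinarith
    linarith
  exact_mod_cast key

lemma D1u_of_upperBohl_lt (hA : BddSys A) {U : Submodule ℝ (Euc d)} {β : ℝ}
    (h : upperBohl A U < (β : EReal)) : D1u A β U := by
  obtain ⟨c, hc1, hc⟩ := sol_growth A hA
  have hc0 : 0 < c := lt_of_lt_of_le one_pos hc1
  rw [upperBohl_eq, iInf_lt_iff] at h
  obtain ⟨N, hN⟩ := h
  set C : ℝ := max 1 (c ^ N * Real.exp (|β| * N)) with hCdef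
  have hC1 : 1 ≤ C := le_max_left _ _
  refine ⟨C, lt_of_lt_of_le one_pos hC1, ?_⟩
  intro m n hmn x₀ hU
  by_cases hx : x₀ = 0
  · simp [hx, sol_zero]
  have ha : 0 < ‖sol A n x₀‖ := sol_norm_pos A hx n
  have hb : 0 < ‖sol A m x₀‖ := sol_norm_pos A hx m
  set T : ℝ := (n : ℝ) - (m : ℝ) with hTdef
  have hT0 : 0 ≤ T := by
    have : (m : ℝ) ≤ (n : ℝ) := by exact_mod_cast hmn
    simp [hTdef]; linarith
  have hepos : 0 < Real.exp (β * T) := Real.exp_pos _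
  by_cases hgap : N < n - m
  · have hr : ((((T : ℝ))⁻¹ * Real.log (‖sol A n x₀‖ / ‖sol A m x₀‖) : ℝ) : EReal)
        ∈ BSet A U N := ⟨m, n, x₀, hU, hx, hgap, rfl⟩
    have hlt := lt_of_le_of_lt (le_sSup hr) hN
    have hrβ : T⁻¹ * Real.log (‖sol A n x₀‖ / ‖sol A m x₀‖) < β := by exact_mod_cast hlt
    obtain ⟨hTpos, -, -⟩ := cast_gap hgap
    have h1 : Real.log (‖sol A n x₀‖ / ‖sol A m x₀‖) < β * T := by
      have := (mul_lt_mul_iff_right₀ hTpos).2 hrβ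
      rw [mul_inv_cancel_left₀ (ne_of_gt hTpos)] at this
      linarith [this]
    have h2 : ‖sol A n x₀‖ / ‖sol A m x₀‖ < Real.exp (β * T) :=
      (Real.log_lt_iff_lt_exp (div_pos ha hb)).1 h1
    have h3 : ‖sol A n x₀‖ < Real.exp (β * T) * ‖sol A m x₀‖ := by
      rw [div_lt_iff₀ hb] at h2; linarith
    nlinarith
  · push_neg at hgap
    have h1 : ‖sol A n x₀‖ ≤ c ^ (n - m) * ‖sol A m x₀‖ := (hc x₀ m n hmn).1
    have h2 : c ^ (n - m) ≤ c ^ N := pow_le_pow_right₀ hc1 hgap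
    have hTN : T ≤ (N : ℝ) := by
      have h3 : n - m ≤ N := hgap
      have h4 : (n : ℝ) ≤ (N : ℝ) + (m : ℝ) := by exact_mod_cast Nat.le_add_of_sub_le h3
      simp [hTdef]; linarith
    have he1 : (1 : ℝ) ≤ Real.exp (|β| * N) * Real.exp (β * T) := by
      rw [← Real.exp_add]
      apply Real.one_le_exp
      have hb1 : -|β| * T ≤ β * T := by
        apply mul_le_mul_of_nonneg_right _ hT0
        linarith [neg_abs_le β]
      nlinarith [abs_nonneg β]
    have hcN : 0 ≤ c ^ N := pow_nonneg hc0.le N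
    have h5 : c ^ N ≤ (c ^ N * Real.exp (|β| * N)) * Real.exp (β * T) := by
      nlinarith
    have h6 : c ^ N * Real.exp (|β| * N) ≤ C := le_max_right _ _
    calc ‖sol A n x₀‖ ≤ c ^ (n - m) * ‖sol A m x₀‖ := h1
      _ ≤ c ^ N * ‖sol A m x₀‖ := mul_le_mul_of_nonneg_right h2 hb.le
      _ ≤ ((c ^ N * Real.exp (|β| * N)) * Real.exp (β * T)) * ‖sol A m x₀‖ :=
          mul_le_mul_of_nonneg_right h5 hb.le
      _ ≤ C * Real.exp (β * T) * ‖sol A m x₀‖ :=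
          mul_le_mul_of_nonneg_right (mul_le_mul_of_nonneg_right h6 hepos.le) hb.le
  
lemma D2u_of_lt_lowerBohl (hA : BddSys A) {U : Submodule ℝ (Euc d)} {β : ℝ}
    (h : (β : EReal) < lowerBohl A U) : D2u A β U := by
  obtain ⟨c, hc1, hc⟩ := sol_growth A hA
  have hc0 : 0 < c := lt_of_lt_of_le one_pos hc1
  rw [lowerBohl_eq, lt_iSup_iff] at h
  obtain ⟨N, hN⟩ := h
  set C : ℝ := min 1 ((c ^ N)⁻¹ * Real.exp (-(|β| * N))) with hCdef
  have hC1 : C ≤ 1 := min_le_left _ _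
  have hC0 : 0 < C := lt_min one_pos (by positivity)
  refine ⟨C, hC0, ?_⟩
  intro m n hmn x₀ hU
  by_cases hx : x₀ = 0
  · simp [hx, sol_zero]
  have ha : 0 < ‖sol A n x₀‖ := sol_norm_pos A hx n
  have hb : 0 < ‖sol A m x₀‖ := sol_norm_pos A hx m
  set T : ℝ := (n : ℝ) - (m : ℝ) with hTdef
  have hT0 : 0 ≤ T := by
    have : (m : ℝ) ≤ (n : ℝ) := by exact_mod_cast hmn
    simp [hTdef]; linarith
  have hepos : 0 < Real.exp (β * T) := Real.exp_pos _
  by_cases hgap : N < n - m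
  · have hr : ((((T : ℝ))⁻¹ * Real.log (‖sol A n x₀‖ / ‖sol A m x₀‖) : ℝ) : EReal)
        ∈ BSet A U N := ⟨m, n, x₀, hU, hx, hgap, rfl⟩
    have hlt := lt_of_lt_of_le hN (sInf_le hr)
    have hrβ : β < T⁻¹ * Real.log (‖sol A n x₀‖ / ‖sol A m x₀‖) := by exact_mod_cast hlt
    obtain ⟨hTpos, -, -⟩ := cast_gap hgap
    have h1 : β * T < Real.log (‖sol A n x₀‖ / ‖sol A m x₀‖) := by
      have := (mul_lt_mul_iff_right₀ hTpos).2 hrβ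
      rw [mul_inv_cancel_left₀ (ne_of_gt hTpos)] at this
      linarith [this]
    have h2 : Real.exp (β * T) < ‖sol A n x₀‖ / ‖sol A m x₀‖ := by
      rw [← Real.exp_log (div_pos ha hb)]
      exact Real.exp_lt_exp.2 h1
    have h3 : Real.exp (β * T) * ‖sol A m x₀‖ < ‖sol A n x₀‖ := by
      rw [lt_div_iff₀ hb] at h2; linarith
    nlinarith
  · push_neg at hgap
    have h1 : ‖sol A m x₀‖ ≤ c ^ (n - m) * ‖sol A n x₀‖ := (hc x₀ m n hmn).2
    have h2 : c ^ (n - m) ≤ c ^ N := pow_le_pow_right₀ hc1 hgap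
    have hTN : T ≤ (N : ℝ) := by
      have h3 : n - m ≤ N := hgap
      have h4 : (n : ℝ) ≤ (N : ℝ) + (m : ℝ) := by exact_mod_cast Nat.le_add_of_sub_le h3
      simp [hTdef]; linarith
    have hcN : 0 < c ^ N := pow_pos hc0 N
    have h4 : ‖sol A m x₀‖ ≤ c ^ N * ‖sol A n x₀‖ :=
      le_trans h1 (mul_le_mul_of_nonneg_right h2 ha.le)
    have h5 : (c ^ N)⁻¹ * ‖sol A m x₀‖ ≤ ‖sol A n x₀‖ := by
      rw [inv_mul_le_iff₀ hcN]; exact h4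
    have he1 : Real.exp (β * T) ≤ Real.exp (|β| * N) := by
      apply Real.exp_le_exp.2
      have hb1 : β * T ≤ |β| * T := mul_le_mul_of_nonneg_right (le_abs_self β) hT0
      nlinarith [abs_nonneg β]
    have h6 : C * Real.exp (β * T) ≤ (c ^ N)⁻¹ := by
      have h7 : C ≤ (c ^ N)⁻¹ * Real.exp (-(|β| * N)) := min_le_right _ _
      have h8 : 0 < Real.exp (-(|β| * N)) := Real.exp_pos _
      have h9 : Real.exp (-(|β| * N)) * Real.exp (|β| * N) = 1 := by
        rw [← Real.exp_add]; simp
      have hci : 0 < (c ^ N)⁻¹ := by positivity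
      nlinarith
    calc C * Real.exp (β * T) * ‖sol A m x₀‖ ≤ (c ^ N)⁻¹ * ‖sol A m x₀‖ :=
          mul_le_mul_of_nonneg_right h6 hb.le
      _ ≤ ‖sol A n x₀‖ := h5

end Aux2
section Aux3

variable {d : ℕ}

lemma exists_finrank_between_aux (L : Submodule ℝ (Euc d)) :
    ∀ (n : ℕ) (W : Submodule ℝ (Euc d)), W ≤ L →
      Module.finrank ℝ W + n ≤ Module.finrank ℝ L →
      ∃ U, W ≤ U ∧ U ≤ L ∧ Module.finrank ℝ U = Module.finrank ℝ W + n := by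
  intro n
  induction n with
  | zero => exact fun W hWL _ => ⟨W, le_rfl, hWL, by omega⟩
  | succ n ih =>
    intro W hWL hle
    have hlt : Module.finrank ℝ W < Module.finrank ℝ L := by omega
    have hWL' : W < L := lt_of_le_of_ne hWL (by rintro rfl; omega)
    obtain ⟨y, hyL, hyW⟩ := SetLike.exists_of_lt hWL'
    have hy0 : y ≠ 0 := fun h => hyW (h ▸ W.zero_mem)
    have hle' : W ⊔ (ℝ ∙ y) ≤ L :=
      sup_le hWL ((Submodule.span_singleton_le_iff_mem y L).2 hyL)
    have hfr : Module.finrank ℝ ↥(W ⊔ (ℝ ∙ y)) = Module.finrank ℝ W + 1 := by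
      have h1 := Submodule.finrank_sup_add_finrank_inf_eq W (ℝ ∙ y)
      have h2 : Module.finrank ℝ ↥(ℝ ∙ y : Submodule ℝ (Euc d)) = 1 :=
        finrank_span_singleton hy0
      have hlt' : W < W ⊔ (ℝ ∙ y) := by
        refine lt_of_le_of_ne le_sup_left fun h => hyW ?_
        have : y ∈ W ⊔ (ℝ ∙ y) :=
          (le_sup_right : (ℝ ∙ y) ≤ W ⊔ (ℝ ∙ y)) (Submodule.mem_span_singleton_self y)
        rwa [← h] at this
      have h3 := Submodule.finrank_lt_finrank_of_lt hlt'
      omega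
    obtain ⟨U, hWU, hUL, hU⟩ := ih (W ⊔ (ℝ ∙ y)) hle' (by omega)
    exact ⟨U, le_trans le_sup_left hWU, hUL, by omega⟩

lemma exists_finrank_between {W L : Submodule ℝ (Euc d)} (hWL : W ≤ L) {j : ℕ}
    (h1 : Module.finrank ℝ W ≤ j) (h2 : j ≤ Module.finrank ℝ L) :
    ∃ U, W ≤ U ∧ U ≤ L ∧ Module.finrank ℝ U = j := by
  obtain ⟨U, hWU, hUL, hU⟩ :=
    exists_finrank_between_aux L (j - Module.finrank ℝ W) W hWL (by omega)
  exact ⟨U, hWU, hUL, by omega⟩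

lemma exists_mem_Gr {L : Submodule ℝ (Euc d)} {j : ℕ} (hj : j ≤ Module.finrank ℝ L)
    {x : Euc d} (hx : x ∈ L) (hx' : x ≠ 0 → 1 ≤ j) : ∃ U ∈ Gr j L, x ∈ U := by
  by_cases h0 : x = 0
  · subst h0
    obtain ⟨U, _, hUL, hU⟩ :=
      exists_finrank_between (bot_le : (⊥ : Submodule ℝ (Euc d)) ≤ L)
        (by rw [finrank_bot]; exact Nat.zero_le j) hj
    exact ⟨U, ⟨hUL, hU⟩, U.zero_mem⟩
  · have hsp : (ℝ ∙ x) ≤ L := (Submodule.span_singleton_le_iff_mem x L).2 hx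
    have hfr : Module.finrank ℝ ↥(ℝ ∙ x : Submodule ℝ (Euc d)) = 1 :=
      finrank_span_singleton h0
    obtain ⟨U, hWU, hUL, hU⟩ := exists_finrank_between hsp (by rw [hfr]; exact hx' h0) hj
    exact ⟨U, ⟨hUL, hU⟩, hWU (Submodule.mem_span_singleton_self x)⟩

lemma isCover_Gr {L : Submodule ℝ (Euc d)} {j : ℕ} (hj : j ≤ Module.finrank ℝ L)
    (hj' : 1 ≤ j ∨ L = ⊥) : IsCover (Gr j L) L := by
  refine ⟨fun U hU => hU.1, Set.Subset.antisymm ?_ ?_⟩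
  · intro x hx
    obtain ⟨U, hU, hxU⟩ := Set.mem_iUnion₂.1 hx
    exact hU.1 hxU
  · intro x hx
    have hx1 : x ≠ 0 → 1 ≤ j := by
      intro hx0
      rcases hj' with h | rfl
      · exact h
      · exact absurd hx (by simpa using hx0)
    obtain ⟨U, hU, hxU⟩ := exists_mem_Gr hj hx hx1
    exact Set.mem_biUnion hU hxU

end Aux3
/-- **Characterization of dichotomy.** `γ ∈ (β̄_{k,j1}, β̲_{k,j2})` iff the `γ`-shifted
system has a dichotomy on a splitting `(L1,L2)` with `dim L1 = k` and uniformity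
dimensions `(j1,j2)`. -/
theorem dichotomy_characterization {d : ℕ} (hd : 1 ≤ d)
    (A : ℕ → (Euc d ≃L[ℝ] Euc d)) (hA : BddSys A)
    (k j1 j2 : ℕ) (hk : k ≤ d) (hadm : KAdmissible d k j1 j2) (γ : ℝ) :
    (upperBohlLim A k j1 < (γ : EReal) ∧ (γ : EReal) < lowerBohlLim A k j2) ↔
    ∃ L1 L2 : Submodule ℝ (Euc d),
      Module.finrank ℝ L1 = k ∧ DichotomyDim A γ L1 L2 j1 j2 := by
  obtain ⟨ha0, ham, had⟩ := hadm
  have hfinEuc : Module.finrank ℝ (Euc d) = d := finrank_euclideanSpace_fin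
  have hj1k : j1 ≤ k := by
    rcases Nat.eq_zero_or_pos k with rfl | hk1
    · exact (ha0 rfl).1.le
    · by_cases hkd : k = d
      · subst hkd; exact (had rfl).2.1
      · exact (ham hk1 (by omega)).2.1
  have hj2k : j2 ≤ d - k := by
    rcases Nat.eq_zero_or_pos k with rfl | hk1
    · simpa using (ha0 rfl).2.2
    · by_cases hkd : k = d
      · have := (had hkd).2.2; omega
      · exact (ham hk1 (by omega)).2.2.2
  constructor
  · rintro ⟨hu, hl⟩
    simp only [upperBohlLim, iInf_lt_iff] at hu
    obtain ⟨L1, hL1, hu⟩ := hu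
    simp only [lowerBohlLim, lt_iSup_iff] at hl
    obtain ⟨L2, hL2, hl⟩ := hl
    have hL1' : Module.finrank ℝ L1 = k := hL1
    have hL2' : Module.finrank ℝ L2 = d - k := hL2
    obtain ⟨r, har, hrγ⟩ := EReal.exists_between_coe_real hu
    obtain ⟨s, hγs, hsb⟩ := EReal.exists_between_coe_real hl
    have hrγ' : r < γ := by exact_mod_cast hrγ
    have hγs' : γ < s := by exact_mod_cast hγs
    set α : ℝ := min (γ - r) (s - γ) with hαdef
    have hα : 0 < α := lt_min (by linarith) (by linarith)
    have hrα : r ≤ γ - α := by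
      have := min_le_left (γ - r) (s - γ); simp only [hαdef]; linarith
    have hsα : γ + α ≤ s := by
      have := min_le_right (γ - r) (s - γ); simp only [hαdef]; linarith
    have hub : ∀ U ∈ Gr j1 L1, upperBohl A U < ((γ - α : ℝ) : EReal) := by
      intro U hU
      refine lt_of_le_of_lt (le_iSup₂ (f := fun U _ => upperBohl A U) U hU) ?_
      exact lt_of_lt_of_le har (by exact_mod_cast hrα)
    have hlb : ∀ U ∈ Gr j2 L2, ((γ + α : ℝ) : EReal) < lowerBohl A U := by
      intro U hU
      refine lt_of_lt_of_le ?_ (iInf₂_le (f := fun U _ => lowerBohl A U) U hU)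
      exact lt_of_le_of_lt (by exact_mod_cast hsα) hsb
    -- disjointness
    have hdisj : Disjoint L1 L2 := by
      rcases Nat.eq_zero_or_pos k with rfl | hk1
      · have : L1 = ⊥ := Submodule.finrank_eq_zero.1 hL1'
        simp [this]
      · by_cases hkd : k = d
        · have : L2 = ⊥ := Submodule.finrank_eq_zero.1 (by omega)
          simp [this]
        · have hmid := ham hk1 (by omega)
          rw [Submodule.disjoint_def]
          intro v hv1 hv2
          by_contra hv0
          obtain ⟨U1, hU1, hvU1⟩ :=
            exists_mem_Gr (L := L1) (j := j1) (by omega) hv1 fun _ => hmid.1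
          obtain ⟨U2, hU2, hvU2⟩ :=
            exists_mem_Gr (L := L2) (j := j2) (by omega) hv2 fun _ => hmid.2.2.1
          have c1 : upperBohl A U1 < (γ : EReal) :=
            lt_of_le_of_lt (le_iSup₂ (f := fun U _ => upperBohl A U) U1 hU1) hu
          have c2 : (γ : EReal) < lowerBohl A U2 :=
            lt_of_lt_of_le hl (iInf₂_le (f := fun U _ => lowerBohl A U) U2 hU2)
          have hs1 : (ℝ ∙ v) ≤ U1 := (Submodule.span_singleton_le_iff_mem v U1).2 hvU1
          have hs2 : (ℝ ∙ v) ≤ U2 := (Submodule.span_singleton_le_iff_mem v U2).2 hvU2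
          have hchain : lowerBohl A U2 ≤ upperBohl A U1 :=
            le_trans (lowerBohl_anti A hs2)
              (le_trans (lowerBohl_le_upperBohl A (Submodule.mem_span_singleton_self v) hv0)
                (upperBohl_mono A hs1))
          exact absurd (lt_trans c2 (lt_of_le_of_lt hchain c1)) (lt_irrefl _)
    have hinf0 : Module.finrank ℝ ↥(L1 ⊓ L2) = 0 := by
      rw [disjoint_iff.1 hdisj]; exact finrank_bot ℝ (Euc d)
    have hsumfr := Submodule.finrank_sup_add_finrank_inf_eq L1 L2
    have hsup : L1 ⊔ L2 = ⊤ := by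
      apply Submodule.eq_top_of_finrank_eq
      rw [hfinEuc]; omega
    have hcompl : IsCompl L1 L2 := ⟨hdisj, codisjoint_iff.2 hsup⟩
    have hbj1 : 1 ≤ j1 ∨ L1 = ⊥ := by
      rcases Nat.eq_zero_or_pos j1 with rfl | h1
      · right
        rcases Nat.eq_zero_or_pos k with rfl | hk1
        · exact Submodule.finrank_eq_zero.1 hL1'
        · by_cases hkd : k = d
          · exact absurd ((had hkd).1) (by omega)
          · exact absurd ((ham hk1 (by omega)).1) (by omega)
      · exact Or.inl h1
    have hbj2 : 1 ≤ j2 ∨ L2 = ⊥ := by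
      rcases Nat.eq_zero_or_pos j2 with rfl | h1
      · right
        refine Submodule.finrank_eq_zero.1 ?_
        rcases Nat.eq_zero_or_pos k with rfl | hk1
        · exact absurd (ha0 rfl).2.1 (by omega)
        · by_cases hkd : k = d
          · omega
          · exact absurd ((ham hk1 (by omega)).2.2.1) (by omega)
      · exact Or.inl h1
    refine ⟨L1, L2, hL1', hcompl, isCover_Gr (by omega) hbj1, isCover_Gr (by omega) hbj2,
      α, hα, ?_, ?_⟩
    · exact fun U hU => D1u_of_upperBohl_lt A hA (hub U hU)
    · exact fun U hU => D2u_of_lt_lowerBohl A hA (hlb U hU)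
  · rintro ⟨L1, L2, hfr1, hcompl, _, _, α, hα, hD1, hD2⟩
    have hfr2 : Module.finrank ℝ L2 = d - k := by
      have := Submodule.finrank_add_eq_of_isCompl hcompl
      rw [hfinEuc] at this; omega
    constructor
    · have hle : upperBohlLim A k j1 ≤ ((γ - α : ℝ) : EReal) := by
        refine le_trans (iInf₂_le (f := fun L _ => ⨆ U ∈ Gr j1 L, upperBohl A U) L1 hfr1) ?_
        exact iSup₂_le fun U hU => upperBohl_le_of_D1u A (hD1 U hU)
      refine lt_of_le_of_lt hle ?_
      exact_mod_cast sub_lt_self γ hα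
    · have hle : ((γ + α : ℝ) : EReal) ≤ lowerBohlLim A k j2 := by
        refine le_trans ?_ (le_iSup₂ (f := fun L _ => ⨅ U ∈ Gr j2 L, lowerBohl A U) L2 hfr2)
        exact le_iInf₂ fun U hU => le_lowerBohl_of_D2u A (hD2 U hU)
      refine lt_of_lt_of_le ?_ hle
      exact_mod_cast lt_add_of_pos_right γ hα

end
end
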